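/- arXiv:2404.05650 — 6 statements merged into one kernel-verified Lean document; each statement's English description precedes it below -/
import Mathlib

section
/- For every e ∈ E, η*(e) > 0. -/
/-!
Since `η*` minimises `z ⬝ᵥ z` over the convex hull `K` of the base vectors, the first-order
condition gives `η* ⬝ᵥ η* ≤ η* ⬝ᵥ 1_B` for every base `B`. Let `Z` be the zero set of `η*`.
The linear functional `(η* + 1_Z) ⬝ᵥ ·` takes the value `η* ⬝ᵥ η*` at `η* ∈ K`, so by the
minimum principle some base `B` has `(η* + 1_Z) ⬝ᵥ 1_B ≤ η* ⬝ᵥ η*`; with the first-order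
condition this forces `B ∩ Z = ∅` and `η* ⬝ᵥ 1_B ≤ η* ⬝ᵥ η*`.
If `η* e = 0`, then `e ∉ B`, and exchanging `e` into `B` for some `f ∈ B` yields a base `B'`
with `η* ⬝ᵥ 1_B' = η* ⬝ᵥ 1_B - η* f < η* ⬝ᵥ η*`, contradicting the first-order condition.
-/

open Set Matroid

/-- The rank of a set in a matroid: the maximum cardinality of an independent subset. -/
noncomputable def Matroid.rk' {α : Type*} (M : Matroid α) (X : Set α) : ℕ :=
  sSup {n : ℕ | ∃ I, I ⊆ X ∧ M.Indep I ∧ n = Nat.card I}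

/-- The set of indicator vectors of bases of a matroid, viewed as vectors in `ℝ^E`. -/
def Matroid.baseVecs {α : Type*} (M : Matroid α) : Set (α → ℝ) :=
  {f | ∃ B, M.IsBase B ∧ f = B.indicator 1}

/-- A matroid is loopless if every singleton of the ground set is independent. -/
def Matroid.Loopless' {α : Type*} (M : Matroid α) : Prop := ∀ e ∈ M.E, M.Indep {e}

open Filter Topology

theorem nonneg_of_forall_mem_Ioc_add_mul_nonneg {a b : ℝ}
    (h : ∀ t ∈ Ioc (0 : ℝ) 1, 0 ≤ a + t * b) : 0 ≤ a := by
  have hcont : Continuous fun t : ℝ => a + t * b := by fun_prop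
  have hlim : Tendsto (fun t : ℝ => a + t * b) (𝓝[>] 0) (𝓝 a) := by
    simpa using (hcont.tendsto 0).mono_left nhdsWithin_le_nhds
  exact ge_of_tendsto hlim (eventually_of_mem (Ioc_mem_nhdsGT one_pos) h)

theorem dotProduct_self_le_dotProduct_of_isMinOn {ι : Type*} [Fintype ι] {K : Set (ι → ℝ)}
    {x y : ι → ℝ} (hK : Convex ℝ K) (hmin : IsMinOn (fun z => z ⬝ᵥ z) K x) (hx : x ∈ K)
    (hy : y ∈ K) : x ⬝ᵥ x ≤ x ⬝ᵥ y := by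
  set d := y - x with hd
  have hsecant : ∀ t ∈ Ioc (0 : ℝ) 1, 0 ≤ 2 * (x ⬝ᵥ d) + t * (d ⬝ᵥ d) := by
    intro t ht
    have hle := isMinOn_iff.1 hmin _ (hK.add_smul_sub_mem hx hy (Ioc_subset_Icc_self ht))
    have hexpand : (x + t • d) ⬝ᵥ (x + t • d)
        = x ⬝ᵥ x + t * (2 * (x ⬝ᵥ d) + t * (d ⬝ᵥ d)) := by
      simp only [add_dotProduct, dotProduct_add, smul_dotProduct, dotProduct_smul, smul_eq_mul,
        dotProduct_comm d x]
      ring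
    rw [hexpand] at hle
    exact nonneg_of_mul_nonneg_right (by linarith) ht.1
  have := nonneg_of_forall_mem_Ioc_add_mul_nonneg hsecant
  rw [hd, dotProduct_sub] at this
  linarith

section Indicator

variable {α : Type*}

theorem indicator_one_nonneg (B : Set α) : 0 ≤ B.indicator (1 : α → ℝ) :=
  indicator_nonneg fun _ _ => zero_le_one

variable [Fintype α]

theorem le_dotProduct_indicator_one {w : α → ℝ} (hw : 0 ≤ w) {B : Set α} {x : α} (hx : x ∈ B) :
    w x ≤ w ⬝ᵥ B.indicator 1 := by
  classical
  have := Finset.single_le_sum (f := fun i => w i * B.indicator 1 i)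
    (fun i _ => mul_nonneg (hw i) (indicator_one_nonneg B i)) (Finset.mem_univ x)
  simpa [dotProduct, indicator_of_mem hx] using this

theorem dotProduct_indicator_one_insert_sdiff [DecidableEq α] (w : α → ℝ) {B : Set α} {e f : α}
    (he : e ∉ B) (hf : f ∈ B) :
    w ⬝ᵥ (insert e B \ {f}).indicator 1 + w f = w ⬝ᵥ B.indicator 1 + w e := by
  have hef : e ≠ f := (ne_of_mem_of_not_mem hf he).symm
  have hind : (insert e B \ {f}).indicator 1 + Pi.single f 1
      = B.indicator (1 : α → ℝ) + Pi.single e 1 := by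
    ext x
    by_cases hxe : x = e <;> by_cases hxf : x = f <;> by_cases hxB : x ∈ B <;> simp_all
  simpa [dotProduct_add, dotProduct_single] using congrArg (w ⬝ᵥ ·) hind

end Indicator

namespace Matroid

variable {α : Type*} {M : Matroid α} {B : Set α}

theorem IsBase.exists_isBase_insert_sdiff {e : α} (hB : M.IsBase B) (he : M.Indep {e})
    (heB : e ∉ B) : ∃ f ∈ B, M.IsBase (insert e B \ {f}) := by
  obtain ⟨B', hB', heB', hB'B⟩ := he.exists_isBase_subset_union_isBase hB
  have hB'B : B' \ B = {e} := by
    refine subset_antisymm (fun x hx => ?_) (singleton_subset_iff.2 ⟨heB' rfl, heB⟩)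
    exact (hB'B hx.1).resolve_right hx.2
  obtain ⟨f, hf⟩ := encard_eq_one.1
    (by rw [hB.encard_sdiff_comm hB', hB'B, encard_singleton] : (B \ B').encard = 1)
  obtain ⟨g, hg, rfl⟩ := hB.eq_exchange_of_sdiff_eq_singleton hB' hf
  obtain rfl : g = e := by rw [hB'B] at hg; exact hg
  exact ⟨f, (hf.symm.subset rfl).1, hB'⟩

variable {x : α → ℝ}

theorem nonneg_of_mem_convexHull_baseVecs (hx : x ∈ convexHull ℝ M.baseVecs) : 0 ≤ x := by
  refine convexHull_min ?_ (convex_Ici 0) hx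
  rintro _ ⟨B, -, rfl⟩
  exact indicator_one_nonneg B

variable [Fintype α]

theorem dotProduct_self_le_dotProduct_indicator_one
    (hmin : IsMinOn (fun z => z ⬝ᵥ z) (convexHull ℝ M.baseVecs) x)
    (hx : x ∈ convexHull ℝ M.baseVecs) (hB : M.IsBase B) : x ⬝ᵥ x ≤ x ⬝ᵥ B.indicator 1 :=
  dotProduct_self_le_dotProduct_of_isMinOn (convex_convexHull ℝ _) hmin hx
    (subset_convexHull ℝ _ ⟨B, hB, rfl⟩)

theorem exists_isBase_dotProduct_le_and_pos_of_isMinOn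
    (hmin : IsMinOn (fun z => z ⬝ᵥ z) (convexHull ℝ M.baseVecs) x)
    (hx : x ∈ convexHull ℝ M.baseVecs) :
    ∃ B, M.IsBase B ∧ x ⬝ᵥ B.indicator 1 ≤ x ⬝ᵥ x ∧ ∀ i ∈ B, 0 < x i := by
  set Z := {i | x i = 0}
  have hZ : Z.indicator 1 ⬝ᵥ x = 0 :=
    Finset.sum_eq_zero fun i _ => by by_cases hi : x i = 0 <;> simp [Z, hi]
  obtain ⟨_, ⟨B, hB, rfl⟩, hBle⟩ :=
    ((dotProductBilin ℝ ℝ (x + Z.indicator 1)).concaveOn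
      (convex_convexHull ℝ _)).exists_le_of_mem_convexHull (subset_convexHull ℝ _) hx
  simp only [dotProductBilin_apply_apply, add_dotProduct, hZ, add_zero] at hBle
  have hfoc := dotProduct_self_le_dotProduct_indicator_one hmin hx hB
  refine ⟨B, hB, ?_, fun i hi => ?_⟩
  · linarith [dotProduct_nonneg_of_nonneg (indicator_one_nonneg Z) (indicator_one_nonneg B)]
  · refine (nonneg_of_mem_convexHull_baseVecs hx i).lt_of_ne' fun hiZ => ?_
    have hZB := le_dotProduct_indicator_one (indicator_one_nonneg Z) hi
    rw [indicator_of_mem (show i ∈ Z from hiZ), Pi.one_apply] at hZB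
    linarith

end Matroid

theorem etaStar_pos_general {α : Type*} [Fintype α]
    (M : Matroid α) (hE : M.E = Set.univ)
    (hloop : M.Loopless')
    (ηs : α → ℝ) (hmem : ηs ∈ convexHull ℝ M.baseVecs)
    (hmin : ∀ η ∈ convexHull ℝ M.baseVecs, ∑ e, ηs e ^ 2 ≤ ∑ e, η e ^ 2) :
    ∀ e, 0 < ηs e := by
  classical
  have hmin' : IsMinOn (fun z => z ⬝ᵥ z) (convexHull ℝ M.baseVecs) ηs :=
    isMinOn_iff.2 fun η hη => by simpa [dotProduct, sq] using hmin η hη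
  obtain ⟨B, hB, hBle, hpos⟩ := exists_isBase_dotProduct_le_and_pos_of_isMinOn hmin' hmem
  intro e
  by_contra! he
  have heB : e ∉ B := fun heB => (hpos e heB).not_ge he
  obtain ⟨f, hfB, hB'⟩ := hB.exists_isBase_insert_sdiff (hloop e (hE ▸ mem_univ e)) heB
  have hexchange := dotProduct_indicator_one_insert_sdiff ηs heB hfB
  have he0 : ηs e = 0 := le_antisymm he (nonneg_of_mem_convexHull_baseVecs hmem e)
  linarith [dotProduct_self_le_dotProduct_indicator_one hmin' hmem hB', hpos f hfB]

/-- For a loopless matroid of positive rank, the optimal usage probabilities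
`η*` (the minimum-Euclidean-norm point of the convex hull of base indicator vectors)
are strictly positive at every element. -/
theorem etaStar_pos {α : Type*} [Fintype α] [Nonempty α]
    (M : Matroid α) (hE : M.E = Set.univ)
    (hloop : M.Loopless') (hrk : 0 < M.rk' M.E)
    (ηs : α → ℝ) (hmem : ηs ∈ convexHull ℝ M.baseVecs)
    (hmin : ∀ η ∈ convexHull ℝ M.baseVecs, ∑ e, ηs e ^ 2 ≤ ∑ e, η e ^ 2) :
    ∀ e, 0 < ηs e :=
  etaStar_pos_general M hE hloop ηs hmem hmin
end

section
/- Let B be a fair base of M, let x ∈ E − B, and let C be a circuit of M with x ∈ C ⊆ B ∪ {x} (such a circuit exists and is unique). Then η*(x) = max_{e∈C} η*(e). -/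
open Set Matroid

/-- A circuit is a minimal dependent subset of the ground set. -/
def Matroid.Circuit' {α : Type*} (M : Matroid α) (C : Set α) : Prop :=
  C ⊆ M.E ∧ ¬ M.Indep C ∧ ∀ D, D ⊂ C → M.Indep D

/-- A fair base: a base receiving positive mass from some probability mass function on
the bases whose element usage probabilities are `η`. -/
def Matroid.FairBase {α : Type*} [Fintype α] (M : Matroid α) (η : α → ℝ) (B : Set α) : Prop :=
  M.IsBase B ∧ ∃ μ : Set α → ℝ, (∀ A, 0 ≤ μ A) ∧ (∀ A, ¬ M.IsBase A → μ A = 0) ∧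
    (∑ A : Set α, μ A) = 1 ∧ (∀ e, (∑ A : Set α, A.indicator (fun _ ↦ μ A) e) = η e) ∧
    0 < μ B

/-! If some `e ∈ C` had `η*(e) > η*(x)`, then `B - e + x` is a base (basis exchange along the
fundamental circuit). Since `B` carries positive mass `μ B`, moving a little mass `t` from `B` to
`B - e + x` stays in the base polytope and changes the usage vector by `t (1_x - 1_e)`, which
lowers the squared norm by `2t (η*(e) - η*(x) - t) > 0` for small `t`: contradiction. -/
section

variable {α : Type*}

lemma Matroid.Circuit'.isCircuit {M : Matroid α} {C : Set α} (hC : M.Circuit' C) :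
    M.IsCircuit C :=
  isCircuit_iff_forall_ssubset.2 ⟨⟨hC.2.1, hC.1⟩, hC.2.2⟩

lemma Matroid.IsBase.insert_sdiff_isBase_of_mem_isCircuit {M : Matroid α} {B C : Set α}
    {x e : α} (hB : M.IsBase B) (hx : x ∉ B) (hC : M.IsCircuit C) (hCB : C ⊆ insert x B)
    (hxC : x ∈ C) (heC : e ∈ C) (heB : e ∈ B) : M.IsBase (insert x B \ {e}) := by
  have hxcl : x ∈ M.closure B := hB.closure_eq ▸ hC.subset_ground hxC
  refine hB.exchange_isBase_of_indep' heB hx ?_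
  rw [← hB.indep.mem_fundCircuit_iff hxcl hx, ← hC.eq_fundCircuit_of_subset hB.indep hCB]
  exact heC

lemma indicator_insert_sdiff_sub_indicator [DecidableEq α] {B : Set α} {x e : α}
    (hx : x ∉ B) (he : e ∈ B) :
    (insert x B \ {e}).indicator (1 : α → ℝ) - B.indicator 1 = Pi.single x 1 - Pi.single e 1 := by
  have hxe : x ≠ e := ne_of_mem_of_not_mem he hx |>.symm
  ext f
  by_cases hfx : f = x
  · subst hfx; simp [hx, hxe]
  by_cases hfe : f = e
  · subst hfe; simp [he, hxe.symm]
  by_cases hfB : f ∈ B <;> simp [hfx, hfe, hfB]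

lemma sum_sq_add_smul_single_sub_single [Fintype α] [DecidableEq α] (η : α → ℝ) {x e : α}
    (hxe : x ≠ e) (t : ℝ) :
    ∑ f, (η + t • (Pi.single x 1 - Pi.single e 1) : α → ℝ) f ^ 2 =
      ∑ f, η f ^ 2 + 2 * t * (η x - η e + t) := by
  rw [← sub_eq_iff_eq_add', ← Finset.sum_sub_distrib,
    Fintype.sum_eq_add x e hxe fun f hf ↦ by simp [hf.1, hf.2]]
  simp [hxe, hxe.symm]
  ring

variable [Fintype α]

structure Matroid.IsBasePMF (M : Matroid α) (μ : Set α → ℝ) : Prop where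
  nonneg : ∀ A, 0 ≤ μ A
  eq_zero_of_not_isBase : ∀ A, ¬ M.IsBase A → μ A = 0
  sum_eq_one : ∑ A, μ A = 1

/-- The element usage vector `e ↦ ∑_{A ∋ e} μ A` of weights `μ` on sets. -/
noncomputable def elementUsage : (Set α → ℝ) →ₗ[ℝ] α → ℝ :=
  Fintype.linearCombination ℝ fun A ↦ A.indicator 1

lemma elementUsage_apply (μ : Set α → ℝ) (e : α) :
    elementUsage μ e = ∑ A : Set α, A.indicator (fun _ ↦ μ A) e := by
  simp only [elementUsage, Fintype.linearCombination_apply, Finset.sum_apply, Pi.smul_apply,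
    smul_eq_mul]
  refine Finset.sum_congr rfl fun A _ ↦ ?_
  by_cases he : e ∈ A <;> simp [he]

lemma elementUsage_single [DecidableEq (Set α)] (A : Set α) :
    elementUsage (Pi.single A 1) = A.indicator 1 := by
  rw [elementUsage, Fintype.linearCombination_apply_single, one_smul]

lemma Matroid.FairBase.exists_isBasePMF {M : Matroid α} {η : α → ℝ} {B : Set α}
    (hB : M.FairBase η B) : ∃ μ, M.IsBasePMF μ ∧ elementUsage μ = η ∧ 0 < μ B := by
  obtain ⟨-, μ, hμ0, hμB, hμ1, hμη, hBpos⟩ := hB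
  exact ⟨μ, ⟨hμ0, hμB, hμ1⟩, funext fun e ↦ (elementUsage_apply μ e).trans (hμη e), hBpos⟩

variable {M : Matroid α} {μ : Set α → ℝ}

lemma Matroid.IsBasePMF.elementUsage_mem_convexHull (hμ : M.IsBasePMF μ) :
    elementUsage μ ∈ convexHull ℝ M.baseVecs := by
  classical
  have hsum : ∑ A ∈ Finset.univ.filter M.IsBase, μ A = 1 := by
    rw [Finset.sum_filter_of_ne fun A _ h ↦ by_contra fun hA ↦ h (hμ.eq_zero_of_not_isBase A hA),
      hμ.sum_eq_one]
  have hmem := (convex_convexHull ℝ M.baseVecs).sum_mem (t := Finset.univ.filter M.IsBase)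
    (fun A _ ↦ hμ.nonneg A) hsum
    fun A hA ↦ subset_convexHull ℝ _ ⟨A, (Finset.mem_filter.1 hA).2, rfl⟩
  rwa [Finset.sum_filter_of_ne fun A _ h ↦ by_contra fun hA ↦ h (by
    rw [hμ.eq_zero_of_not_isBase A hA, zero_smul])] at hmem

lemma Matroid.IsBasePMF.transfer [DecidableEq (Set α)] (hμ : M.IsBasePMF μ) {B B' : Set α}
    (hB : M.IsBase B) (hB' : M.IsBase B') {t : ℝ} (ht : 0 ≤ t) (htB : t ≤ μ B) :
    M.IsBasePMF (μ + t • (Pi.single B' 1 - Pi.single B 1)) where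
  nonneg A := by
    have := hμ.nonneg A
    obtain rfl | hAB := eq_or_ne A B
    · obtain rfl | hBB' := eq_or_ne A B' <;> simp [*]
    · obtain rfl | hAB' := eq_or_ne A B' <;> simp [*]; positivity
  eq_zero_of_not_isBase A hA := by
    have hAB : A ≠ B := by rintro rfl; exact hA hB
    have hAB' : A ≠ B' := by rintro rfl; exact hA hB'
    simp [hμ.eq_zero_of_not_isBase A hA, hAB, hAB']
  sum_eq_one := by
    simp [Finset.sum_add_distrib, ← Finset.mul_sum, hμ.sum_eq_one]

end

theorem etaStar_eq_max_on_fundamental_circuit_general {α : Type*} [Fintype α]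
    (M : Matroid α) (ηs : α → ℝ)
    (hmin : ∀ η ∈ convexHull ℝ M.baseVecs, ∑ e, ηs e ^ 2 ≤ ∑ e, η e ^ 2)
    (B : Set α) (hB : M.FairBase ηs B)
    (x : α) (hx : x ∉ B)
    (C : Set α) (hC : M.Circuit' C) (hxC : x ∈ C) (hCB : C ⊆ B ∪ {x}) :
    IsGreatest (ηs '' C) (ηs x) := by
  classical
  refine ⟨mem_image_of_mem ηs hxC, ?_⟩
  rintro _ ⟨e, heC, rfl⟩
  obtain rfl | hex := eq_or_ne e x
  · rfl
  by_contra! hlt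
  rw [union_singleton] at hCB
  have heB : e ∈ B := (hCB heC).resolve_left hex
  have hBase : M.IsBase B := hB.1
  have hB' := hBase.insert_sdiff_isBase_of_mem_isCircuit hx hC.isCircuit hCB hxC heC heB
  obtain ⟨μ, hμ, hμη, hμB⟩ := hB.exists_isBasePMF
  set t := min (μ B) ((ηs e - ηs x) / 2)
  have ht : 0 < t := lt_min hμB (by linarith)
  have hmem := (hμ.transfer hBase hB' ht.le (min_le_left _ _)).elementUsage_mem_convexHull
  rw [map_add, map_smul, map_sub, elementUsage_single, elementUsage_single, hμη,
    indicator_insert_sdiff_sub_indicator hx heB] at hmem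
  have hle := hmin _ hmem
  rw [sum_sq_add_smul_single_sub_single ηs hex.symm] at hle
  nlinarith [min_le_right (μ B) ((ηs e - ηs x) / 2)]

/-- If `B` is a fair base, `x ∈ E − B`, and `C` is the circuit with `x ∈ C ⊆ B ∪ {x}`,
then `η*(x) = max_{e ∈ C} η*(e)`. -/
theorem etaStar_eq_max_on_fundamental_circuit {α : Type*} [Fintype α] [Nonempty α]
    (M : Matroid α) (hE : M.E = Set.univ)
    (hloop : M.Loopless') (hrk : 0 < M.rk' M.E)
    (ηs : α → ℝ) (hmem : ηs ∈ convexHull ℝ M.baseVecs)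
    (hmin : ∀ η ∈ convexHull ℝ M.baseVecs, ∑ e, ηs e ^ 2 ≤ ∑ e, η e ^ 2)
    (B : Set α) (hB : M.FairBase ηs B)
    (x : α) (hx : x ∉ B)
    (C : Set α) (hC : M.Circuit' C) (hxC : x ∈ C) (hCB : C ⊆ B ∪ {x}) :
    IsGreatest (ηs '' C) (ηs x) :=
  etaStar_eq_max_on_fundamental_circuit_general M ηs hmin B hB x hx C hC hxC hCB
end

section
/- For every subset X ⊆ E, η*(X) ≥ r(E) − r(E−X); moreover equality holds if and only if every fair base B of M satisfies |B − X| = r(E−X). -/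
open Set Matroid

/-!
Write `η*` as a convex combination `∑ μ(B) 1_B` of bases. Then `η*(X) = ∑ μ(B) |B ∩ X|`, and for
every base `|B ∩ X| = r(E) - |B - X| ≥ r(E) - r(E - X)`, since `B - X` is independent in `E - X`.
Averaging gives the bound, with equality exactly when every base charged by `μ` has
`|B - X| = r(E - X)`. This holds for every such decomposition, and the fair bases are exactly the
bases charged by one of them.
-/

lemma le_sum_mul_and_eq_iff_of_sum_eq_one {ι : Type*} {s : Finset ι} {w f : ι → ℝ} {c : ℝ}
    (hw₀ : ∀ i ∈ s, 0 ≤ w i) (hw₁ : ∑ i ∈ s, w i = 1) (hf : ∀ i ∈ s, 0 < w i → c ≤ f i) :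
    c ≤ ∑ i ∈ s, w i * f i ∧ (∑ i ∈ s, w i * f i = c ↔ ∀ i ∈ s, 0 < w i → f i = c) := by
  have hsub : ∑ i ∈ s, w i * f i - c = ∑ i ∈ s, w i * (f i - c) := by
    simp only [mul_sub, Finset.sum_sub_distrib, ← Finset.sum_mul, hw₁, one_mul]
  have hterm : ∀ i ∈ s, 0 ≤ w i * (f i - c) := fun i hi ↦ by
    rcases (hw₀ i hi).eq_or_lt with h | h
    · simp [← h]
    · exact mul_nonneg h.le (sub_nonneg.2 (hf i hi h))
  refine ⟨sub_nonneg.1 (hsub ▸ Finset.sum_nonneg hterm), ?_⟩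
  rw [← sub_eq_zero, hsub, Finset.sum_eq_zero_iff_of_nonneg hterm]
  refine forall₂_congr fun i hi ↦ ⟨fun h hw ↦ ?_, fun h ↦ ?_⟩
  · exact sub_eq_zero.1 ((mul_eq_zero.1 h).resolve_left hw.ne')
  · rcases (hw₀ i hi).eq_or_lt with hw | hw
    · simp [← hw]
    · simp [h hw]

lemma sum_indicator_eq_sum_mul_ncard_inter {α : Type*} [Fintype α] {μ : Set α → ℝ} {η : α → ℝ}
    (hη : ∀ e, ∑ A : Set α, A.indicator (fun _ ↦ μ A) e = η e) (X : Set α) :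
    ∑ e, X.indicator η e = ∑ A : Set α, μ A * (A ∩ X).ncard := by
  classical
  calc ∑ e, X.indicator η e = ∑ e, ∑ A : Set α, (A ∩ X).indicator (fun _ ↦ μ A) e :=
        Finset.sum_congr rfl fun e _ ↦ by
          by_cases he : e ∈ X <;> simp [he, ← hη e, Set.indicator_apply]
    _ = ∑ A : Set α, ∑ e, (A ∩ X).indicator (fun _ ↦ μ A) e := Finset.sum_comm
    _ = ∑ A : Set α, μ A * (A ∩ X).ncard := Finset.sum_congr rfl fun A _ ↦ by
        generalize A ∩ X = S
        simp [Set.indicator_apply, Finset.sum_ite, Set.ncard_eq_toFinset_card', mul_comm]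

namespace Matroid

variable {α : Type*} {M : Matroid α} {A B I X : Set α}

section Rank

variable [Finite α]

lemma bddAbove_natCard_indep_subset (M : Matroid α) (X : Set α) :
    BddAbove {n : ℕ | ∃ I, I ⊆ X ∧ M.Indep I ∧ n = Nat.card I} :=
  ⟨Nat.card α, by rintro n ⟨I, -, -, rfl⟩; exact Nat.card_coe_set_eq I ▸ I.ncard_le_card⟩

lemma Indep.ncard_le_rk'_of_subset (hI : M.Indep I) (hIX : I ⊆ X) : I.ncard ≤ M.rk' X :=
  le_csSup (bddAbove_natCard_indep_subset M X) ⟨I, hIX, hI, (Nat.card_coe_set_eq I).symm⟩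

lemma exists_indep_ncard_eq_rk' (M : Matroid α) (X : Set α) :
    ∃ I, I ⊆ X ∧ M.Indep I ∧ I.ncard = M.rk' X := by
  obtain ⟨I, hIX, hI, hcard⟩ : M.rk' X ∈ {n : ℕ | ∃ I, I ⊆ X ∧ M.Indep I ∧ n = Nat.card I} :=
    Nat.sSup_mem ⟨0, ∅, empty_subset X, M.empty_indep, by simp⟩ (bddAbove_natCard_indep_subset M X)
  exact ⟨I, hIX, hI, by rw [hcard, Nat.card_coe_set_eq]⟩

lemma IsBase.ncard_eq_rk'_ground (hB : M.IsBase B) : B.ncard = M.rk' M.E := by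
  refine le_antisymm (hB.indep.ncard_le_rk'_of_subset hB.subset_ground) ?_
  obtain ⟨I, -, hI, hcard⟩ := M.exists_indep_ncard_eq_rk' M.E
  obtain ⟨B', hB', hIB'⟩ := hI.exists_isBase_superset
  calc M.rk' M.E = I.ncard := hcard.symm
    _ ≤ B'.ncard := ncard_le_ncard hIB'
    _ = B.ncard := hB'.ncard_eq_ncard_of_isBase hB

lemma IsBase.ncard_inter_add_ncard_diff (hB : M.IsBase B) (X : Set α) :
    (B ∩ X).ncard + (B \ X).ncard = M.rk' M.E :=
  (ncard_inter_add_ncard_sdiff_eq_ncard B X).trans hB.ncard_eq_rk'_ground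

lemma IsBase.ncard_diff_le_rk' (hB : M.IsBase B) (X : Set α) :
    (B \ X).ncard ≤ M.rk' (M.E \ X) :=
  (hB.indep.subset sdiff_subset).ncard_le_rk'_of_subset (sdiff_subset_sdiff_left hB.subset_ground)

end Rank

lemma IsBase.rk'_sub_le_ncard_inter [Finite α] (hB : M.IsBase B) (X : Set α) :
    (M.rk' M.E : ℝ) - M.rk' (M.E \ X) ≤ (B ∩ X).ncard := by
  have hsplit := hB.ncard_inter_add_ncard_diff X
  have hdiff := hB.ncard_diff_le_rk' X
  rw [← hsplit, Nat.cast_add, sub_le_iff_le_add, add_le_add_iff_left]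
  exact_mod_cast hdiff

lemma IsBase.ncard_inter_eq_rk'_sub_iff [Finite α] (hB : M.IsBase B) (X : Set α) :
    ((B ∩ X).ncard : ℝ) = M.rk' M.E - M.rk' (M.E \ X) ↔ (B \ X).ncard = M.rk' (M.E \ X) := by
  rw [← hB.ncard_inter_add_ncard_diff X, Nat.cast_add, eq_sub_iff_add_eq, add_right_inj]
  exact Nat.cast_inj.trans eq_comm

variable [Fintype α]

structure IsBaseDistribution (M : Matroid α) (η : α → ℝ) (μ : Set α → ℝ) : Prop where
  nonneg : ∀ A, 0 ≤ μ A
  eq_zero_of_not_isBase : ∀ A, ¬ M.IsBase A → μ A = 0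
  sum_eq_one : ∑ A : Set α, μ A = 1
  marginal : ∀ e, ∑ A : Set α, A.indicator (fun _ ↦ μ A) e = η e

namespace IsBaseDistribution

variable {η : α → ℝ} {μ : Set α → ℝ}

lemma isBase_of_pos (hμ : M.IsBaseDistribution η μ) (hA : 0 < μ A) : M.IsBase A :=
  by_contra fun h ↦ hA.ne' (hμ.eq_zero_of_not_isBase A h)

lemma le_sum_indicator_and_eq_iff (hμ : M.IsBaseDistribution η μ) (X : Set α) :
    (M.rk' M.E : ℝ) - M.rk' (M.E \ X) ≤ ∑ e, X.indicator η e ∧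
    (∑ e, X.indicator η e = (M.rk' M.E : ℝ) - M.rk' (M.E \ X) ↔
      ∀ B, 0 < μ B → (B \ X).ncard = M.rk' (M.E \ X)) := by
  rw [sum_indicator_eq_sum_mul_ncard_inter hμ.marginal X]
  obtain ⟨hle, heq⟩ := le_sum_mul_and_eq_iff_of_sum_eq_one (fun A _ ↦ hμ.nonneg A) hμ.sum_eq_one
    fun A _ hA ↦ (hμ.isBase_of_pos hA).rk'_sub_le_ncard_inter X
  refine ⟨hle, heq.trans ?_⟩
  simp only [Finset.mem_univ, true_implies]
  exact forall₂_congr fun B hB ↦ (hμ.isBase_of_pos hB).ncard_inter_eq_rk'_sub_iff X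

end IsBaseDistribution

lemma exists_isBaseDistribution_of_mem_convexHull {η : α → ℝ}
    (hη : η ∈ convexHull ℝ M.baseVecs) : ∃ μ, M.IsBaseDistribution η μ := by
  classical
  obtain ⟨ι, _, w, z, hw₀, hw₁, hz, rfl⟩ := mem_convexHull_iff_exists_fintype.1 hη
  choose B hB hzB using hz
  refine ⟨fun A ↦ ∑ i, if B i = A then w i else 0, ⟨fun A ↦ ?_, fun A hA ↦ ?_, ?_, fun e ↦ ?_⟩⟩
  · exact Finset.sum_nonneg fun i _ ↦ by split_ifs <;> simp [hw₀]
  · exact Finset.sum_eq_zero fun i _ ↦ if_neg fun h : B i = A ↦ hA (h ▸ hB i)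
  · rw [Finset.sum_comm]
    simpa using hw₁
  · have hA : ∀ A : Set α, A.indicator (fun _ ↦ ∑ i, if B i = A then w i else 0) e =
        ∑ i, if B i = A then w i * (B i).indicator 1 e else 0 := fun A ↦ by
      by_cases he : e ∈ A <;> simp +contextual [he]
    simp only [hA, hzB]
    rw [Finset.sum_comm]
    simp

end Matroid

theorem etaStar_set_lower_bound_general {α : Type*} [Fintype α]
    (M : Matroid α)
    (ηs : α → ℝ) (hmem : ηs ∈ convexHull ℝ M.baseVecs)
    (X : Set α) :
    ((M.rk' M.E : ℝ) - (M.rk' (M.E \ X) : ℝ) ≤ ∑ e, X.indicator ηs e) ∧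
    (∑ e, X.indicator ηs e = (M.rk' M.E : ℝ) - (M.rk' (M.E \ X) : ℝ) ↔
      ∀ B, M.FairBase ηs B → Nat.card (B \ X : Set α) = M.rk' (M.E \ X)) := by
  obtain ⟨μ, hμ⟩ := M.exists_isBaseDistribution_of_mem_convexHull hmem
  obtain ⟨hle, heq⟩ := hμ.le_sum_indicator_and_eq_iff X
  refine ⟨hle, fun h B ⟨_, ν, hν₀, hνb, hν₁, hνη, hνB⟩ ↦ ?_, fun h ↦ heq.2 fun B hB ↦ ?_⟩
  · rw [Nat.card_coe_set_eq]
    exact ((IsBaseDistribution.mk hν₀ hνb hν₁ hνη).le_sum_indicator_and_eq_iff X).2.1 h B hνB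
  · rw [← Nat.card_coe_set_eq]
    exact h B ⟨hμ.isBase_of_pos hB, μ, hμ.nonneg, hμ.eq_zero_of_not_isBase, hμ.sum_eq_one,
      hμ.marginal, hB⟩

/-- For every `X ⊆ E`, `η*(X) ≥ r(E) − r(E−X)`, with equality iff every fair base `B`
satisfies `|B − X| = r(E−X)`. -/
theorem etaStar_set_lower_bound {α : Type*} [Fintype α] [Nonempty α]
    (M : Matroid α) (hE : M.E = Set.univ)
    (hloop : M.Loopless') (hrk : 0 < M.rk' M.E)
    (ηs : α → ℝ) (hmem : ηs ∈ convexHull ℝ M.baseVecs)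
    (hmin : ∀ η ∈ convexHull ℝ M.baseVecs, ∑ e, ηs e ^ 2 ≤ ∑ e, η e ^ 2)
    (X : Set α) (hX : X ⊆ M.E) :
    ((M.rk' M.E : ℝ) - (M.rk' (M.E \ X) : ℝ) ≤ ∑ e, X.indicator ηs e) ∧
    (∑ e, X.indicator ηs e = (M.rk' M.E : ℝ) - (M.rk' (M.E \ X) : ℝ) ↔
      ∀ B, M.FairBase ηs B → Nat.card (B \ X : Set α) = M.rk' (M.E \ X)) :=
  etaStar_set_lower_bound_general M ηs hmem X
end

section
/- Let Y = E_min = {e ∈ E : η*(e) = min_{e'∈E} η*(e')} and write η*_min = min_{e'∈E} η*(e'). Then: (1) η*(Y) = r(Y); (2) cl(Y) = Y; (3) η*_min = r(Y)/|Y| > 0; (4) η*_min = 1/D(M); (5) the unique point of minimum Euclidean norm in the convex hull of the indicator vectors of the bases of the restriction M|Y is the constant vector on Y with value η*_min. -/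
open Set Matroid

/-- The fractional arboricity `D(M) = max{ |X| / r(X) : X ⊆ E, r(X) > 0 }`. -/
noncomputable def Matroid.arboricity {α : Type*} (M : Matroid α) : ℝ :=
  sSup {s : ℝ | ∃ X, X ⊆ M.E ∧ 0 < M.rk' X ∧ s = (Nat.card X : ℝ) / (M.rk' X : ℝ)}

/-! Write `η* = ∑ wᵢ 1_{Bᵢ}` with all `wᵢ > 0`. Shifting the weight `wᵢ` from `Bᵢ` to any other
base stays in the base polytope, so minimality of the norm makes every `Bᵢ` a base of minimum
`η*`-weight. The exchange argument for minimum-weight bases then shows that every element has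
positive weight (by looplessness) and that each `Bᵢ` meets the bottom level set `Y` in a basis of `Y`.
Hence `η*|Y = ∑ wᵢ 1_{Bᵢ ∩ Y}` lies in the base polytope of `M|Y`, where all points have total
weight `r(Y)` and, by Cauchy–Schwarz, constant vectors have least norm; `Y` is closed because an
element of `cl(Y) - Y` lying in some `Bᵢ` would be spanned by `Bᵢ ∩ Y`. Finally
`η*_min |X| ≤ η*(X) ≤ r(X)` for all `X`, with equality at `Y`, which computes `D(M)`. -/

section

variable {α : Type*}

section Finite

variable [Fintype α]

lemma sum_indicator_eq_sum_toFinset (X : Set α) [Fintype X] (η : α → ℝ) :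
    ∑ e, X.indicator η e = ∑ e ∈ X.toFinset, η e := by
  simpa using Finset.sum_indicator_subset η (Finset.subset_univ X.toFinset)

lemma sum_indicator_const (X : Set α) (c : ℝ) :
    ∑ e, X.indicator (fun _ ↦ c) e = c * X.ncard := by
  classical
  rw [sum_indicator_eq_sum_toFinset, Finset.sum_const, ncard_eq_toFinset_card', nsmul_eq_mul,
    mul_comm]

lemma sum_indicator_one (X : Set α) : ∑ e, X.indicator (1 : α → ℝ) e = X.ncard :=
  (sum_indicator_const X 1).trans (one_mul _)

lemma mul_ncard_le_sum_indicator {c : ℝ} {η : α → ℝ} (h : ∀ e, c ≤ η e) (X : Set α) :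
    c * X.ncard ≤ ∑ e, X.indicator η e :=
  sum_indicator_const X c ▸ Finset.sum_le_sum fun e _ ↦ indicator_le_indicator (h e)

lemma sum_sq_indicator_const_le {Y : Set α} {c : ℝ} {η : α → ℝ}
    (hc : c * Y.ncard = ∑ e, Y.indicator η e) :
    ∑ e, Y.indicator (fun _ ↦ c) e ^ 2 ≤ ∑ e, η e ^ 2 := by
  classical
  have hsq : ∀ e, Y.indicator (fun _ ↦ c) e ^ 2 = Y.indicator (fun _ ↦ c ^ 2) e := fun e ↦ by
    by_cases he : e ∈ Y <;> simp [he]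
  have hCS : (∑ e ∈ Y.toFinset, η e) ^ 2 ≤ Y.toFinset.card * ∑ e ∈ Y.toFinset, η e ^ 2 :=
    sq_sum_le_card_mul_sum_sq
  have hsub : ∑ e ∈ Y.toFinset, η e ^ 2 ≤ ∑ e, η e ^ 2 :=
    Finset.sum_le_sum_of_subset_of_nonneg (Finset.subset_univ _) fun e _ _ ↦ sq_nonneg (η e)
  rw [← sum_indicator_eq_sum_toFinset, ← hc, ← ncard_eq_toFinset_card'] at hCS
  simp only [hsq, sum_indicator_const]
  rcases (Y.ncard.zero_le).eq_or_lt with hY | hY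
  · simp only [← hY, Nat.cast_zero, mul_zero]
    exact Finset.sum_nonneg fun e _ ↦ sq_nonneg (η e)
  · have hY' : (0 : ℝ) < Y.ncard := by exact_mod_cast hY
    nlinarith

lemma sum_mul_sub_nonneg_of_isMinNorm {S : Set (α → ℝ)} (hS : Convex ℝ S) {p q : α → ℝ}
    (hp : p ∈ S) (hmin : ∀ η ∈ S, ∑ e, p e ^ 2 ≤ ∑ e, η e ^ 2) (hq : q ∈ S) :
    0 ≤ ∑ e, p e * (q e - p e) := by
  set a := ∑ e, p e * (q e - p e)
  set b := ∑ e, (q e - p e) ^ 2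
  have hseg : ∀ t ∈ Ioo (0 : ℝ) 1, 0 ≤ 2 * a + t * b := by
    intro t ht
    have hexp : ∑ e, (p + t • (q - p)) e ^ 2 = ∑ e, p e ^ 2 + t * (2 * a + t * b) := by
      simp only [a, b, Pi.add_apply, Pi.smul_apply, Pi.sub_apply, smul_eq_mul, Finset.mul_sum,
        ← Finset.sum_add_distrib]
      exact Finset.sum_congr rfl fun e _ ↦ by ring
    have := hmin _ (hS.add_smul_sub_mem hp hq (Ioo_subset_Icc_self ht))
    rw [hexp] at this
    exact nonneg_of_mul_nonneg_right (by linarith) ht.1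
  have hcont : Continuous fun t : ℝ ↦ 2 * a + t * b := by fun_prop
  have hlim : Filter.Tendsto (fun t ↦ 2 * a + t * b) (nhdsWithin 0 (Ioi 0)) (nhds (2 * a)) :=
    (hcont.tendsto' 0 _ (by simp)).mono_left nhdsWithin_le_nhds
  have := ge_of_tendsto hlim (Filter.mem_of_superset (Ioo_mem_nhdsGT one_pos) hseg)
  linarith

end Finite

namespace Matroid

variable {M : Matroid α} {η : α → ℝ}

structure IsBaseCombination (M : Matroid α) (η : α → ℝ) {ι : Type*} (t : Finset ι)
    (w : ι → ℝ) (B : ι → Set α) : Prop where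
  pos : ∀ i ∈ t, 0 < w i
  sum_eq_one : ∑ i ∈ t, w i = 1
  isBase : ∀ i ∈ t, M.IsBase (B i)
  eq_sum : η = ∑ i ∈ t, w i • (B i).indicator 1

lemma exists_isBaseCombination_of_mem_convexHull (hη : η ∈ convexHull ℝ M.baseVecs) :
    ∃ (ι : Type) (t : Finset ι) (w : ι → ℝ) (B : ι → Set α), M.IsBaseCombination η t w B := by
  classical
  rw [convexHull_eq] at hη
  obtain ⟨ι, t, w, z, hw0, hw1, hz, rfl⟩ := hη
  choose! B hB hzB using hz
  refine ⟨ι, t.filter (w · ≠ 0), w, B, fun i hi ↦ ?_, ?_,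
    fun i hi ↦ hB i (Finset.mem_filter.1 hi).1, ?_⟩
  · obtain ⟨hit, hwi⟩ := Finset.mem_filter.1 hi
    exact (hw0 i hit).lt_of_ne' hwi
  · rwa [Finset.sum_filter_ne_zero]
  · rw [Finset.centerMass_eq_of_sum_1 _ _ hw1,
      Finset.sum_filter_of_ne (p := (w · ≠ 0)) fun i _ hne hwi ↦ hne (by rw [hwi, zero_smul])]
    exact Finset.sum_congr rfl fun i hi ↦ by rw [hzB i hi]

namespace IsBaseCombination

variable {ι : Type*} {t : Finset ι} {w : ι → ℝ} {B : ι → Set α} {i : ι} {e : α}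

lemma mem_convexHull (h : M.IsBaseCombination η t w B) : η ∈ convexHull ℝ M.baseVecs :=
  h.eq_sum ▸ (convex_convexHull ℝ _).sum_mem (fun i hi ↦ (h.pos i hi).le) h.sum_eq_one
    fun i hi ↦ subset_convexHull ℝ _ ⟨B i, h.isBase i hi, rfl⟩

lemma apply (h : M.IsBaseCombination η t w B) (e : α) :
    η e = ∑ i ∈ t, w i * (B i).indicator 1 e := by
  rw [h.eq_sum, Finset.sum_apply]
  rfl

lemma nonneg (h : M.IsBaseCombination η t w B) (e : α) : 0 ≤ η e :=
  h.apply e ▸ Finset.sum_nonneg fun i hi ↦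
    mul_nonneg (h.pos i hi).le (indicator_nonneg (fun _ _ ↦ zero_le_one) e)

lemma le_apply (h : M.IsBaseCombination η t w B) (hi : i ∈ t) (he : e ∈ B i) : w i ≤ η e := by
  rw [h.apply e]
  refine le_of_eq_of_le ?_ (Finset.single_le_sum (fun j hj ↦ mul_nonneg (h.pos j hj).le
    (indicator_nonneg (fun _ _ ↦ zero_le_one) e)) hi)
  simp [he]

lemma exists_mem_of_pos (h : M.IsBaseCombination η t w B) (he : 0 < η e) :
    ∃ i ∈ t, e ∈ B i := by
  by_contra! hnot
  rw [h.apply e, Finset.sum_eq_zero fun i hi ↦ by simp [hnot i hi]] at he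
  exact he.false

lemma update [DecidableEq ι] (h : M.IsBaseCombination η t w B) (hi : i ∈ t) {B' : Set α}
    (hB' : M.IsBase B') :
    M.IsBaseCombination (η + w i • (B'.indicator 1 - (B i).indicator 1)) t w
      (Function.update B i B') where
  pos := h.pos
  sum_eq_one := h.sum_eq_one
  isBase j hj := by
    rcases eq_or_ne j i with rfl | hji
    · simpa using hB'
    · simpa [hji] using h.isBase j hj
  eq_sum := by
    rw [h.eq_sum, Finset.sum_eq_add_sum_sdiff_singleton_of_mem hi]
    simp_rw [Function.apply_update (fun j (C : Set α) ↦ w j • C.indicator (1 : α → ℝ))]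
    rw [Finset.sum_update_of_mem hi, smul_sub]
    abel

lemma restrict (h : M.IsBaseCombination η t w B) {Y : Set α}
    (hY : ∀ i ∈ t, M.IsBasis (B i ∩ Y) Y) :
    (M ↾ Y).IsBaseCombination (Y.indicator η) t w (fun i ↦ B i ∩ Y) where
  pos := h.pos
  sum_eq_one := h.sum_eq_one
  isBase i hi := (hY i hi).restrict_isBase
  eq_sum := by
    ext e
    rw [Finset.sum_apply]
    by_cases he : e ∈ Y
    · simp only [indicator_of_mem he, h.apply e, Pi.smul_apply, smul_eq_mul]
      refine Finset.sum_congr rfl fun i _ ↦ ?_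
      by_cases heB : e ∈ B i <;> simp [heB, he]
    · simp [he]

end IsBaseCombination

variable {B I J X Y : Set α} {e : α}

lemma Indep.inter_closure_subset (hB : M.Indep B) (h : M.IsBasis (B ∩ Y) Y) :
    B ∩ M.closure Y ⊆ Y := by
  rintro e ⟨heB, hecl⟩
  by_contra heY
  have hsub : B ∩ Y ⊆ B \ {e} := fun x hx ↦ ⟨hx.1, fun hxe ↦ heY (hxe ▸ hx.2)⟩
  exact hB.notMem_closure_sdiff_of_mem heB
    (M.closure_subset_closure hsub (h.closure_eq_closure ▸ hecl))

lemma arboricity_eq_one_div {c : ℝ} (hY : Y ⊆ M.E) (hYr : 0 < M.rk' Y)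
    (hYc : c * Y.ncard = M.rk' Y) (hle : ∀ X ⊆ M.E, c * X.ncard ≤ M.rk' X) :
    M.arboricity = 1 / c := by
  have hYr' : (0 : ℝ) < M.rk' Y := by exact_mod_cast hYr
  have hc : 0 < c := pos_of_mul_pos_left (hYc ▸ hYr') (Nat.cast_nonneg _)
  refine IsGreatest.csSup_eq ⟨⟨Y, hY, hYr, ?_⟩, ?_⟩
  · have hn : (0 : ℝ) < Y.ncard := pos_of_mul_pos_right (hYc ▸ hYr') hc.le
    rw [Nat.card_coe_set_eq, ← hYc, div_mul_cancel_right₀ hn.ne', one_div]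
  · rintro _ ⟨X, hX, hXr, rfl⟩
    rw [Nat.card_coe_set_eq, div_le_div_iff₀ (by exact_mod_cast hXr) hc, one_mul, mul_comm]
    exact hle X hX

variable [Fintype α]

lemma IsBasis.rk'_eq_ncard (h : M.IsBasis I X) : M.rk' X = I.ncard := by
  have hub : ∀ n ∈ {n : ℕ | ∃ J, J ⊆ X ∧ M.Indep J ∧ n = Nat.card J}, n ≤ I.ncard := by
    rintro n ⟨J, hJX, hJ, rfl⟩
    obtain ⟨I', hI', hJI'⟩ := hJ.subset_isBasis_of_subset hJX h.subset_ground
    rw [Nat.card_coe_set_eq,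
      ← hI'.restrict_isBase.ncard_eq_ncard_of_isBase h.restrict_isBase]
    exact ncard_le_ncard hJI'
  have hI : I.ncard ∈ {n : ℕ | ∃ J, J ⊆ X ∧ M.Indep J ∧ n = Nat.card J} :=
    ⟨I, h.subset, h.indep, (Nat.card_coe_set_eq I).symm⟩
  exact le_antisymm (csSup_le ⟨_, hI⟩ hub) (le_csSup ⟨_, hub⟩ hI)

lemma Indep.ncard_le_rk' (hJ : M.Indep J) (hJX : J ⊆ X) (hX : X ⊆ M.E) : J.ncard ≤ M.rk' X := by
  obtain ⟨I, hI, hJI⟩ := hJ.subset_isBasis_of_subset hJX hX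
  rw [hI.rk'_eq_ncard]
  exact ncard_le_ncard hJI

lemma isLinearMap_sum_indicator (X : Set α) :
    IsLinearMap ℝ fun η : α → ℝ ↦ ∑ e, X.indicator η e where
  map_add η η' := by simp only [indicator_add', Pi.add_apply, Finset.sum_add_distrib]
  map_smul c η := by
    simp only [Pi.smul_def, smul_eq_mul, Finset.mul_sum, indicator_mul_right]

lemma sum_indicator_le_rk'_of_mem_convexHull (hη : η ∈ convexHull ℝ M.baseVecs)
    (hX : X ⊆ M.E) : ∑ e, X.indicator η e ≤ M.rk' X := by
  refine convexHull_min ?_ (convex_halfSpace_le (isLinearMap_sum_indicator X) _) hη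
  rintro _ ⟨B, hB, rfl⟩
  rw [mem_ofPred_eq, indicator_indicator, sum_indicator_one]
  exact_mod_cast (hB.indep.subset inter_subset_right).ncard_le_rk' inter_subset_left hX

lemma sum_indicator_eq_rk'_of_mem_convexHull_restrict (hη : η ∈ convexHull ℝ (M ↾ Y).baseVecs)
    (hY : Y ⊆ M.E) : ∑ e, Y.indicator η e = M.rk' Y := by
  refine convexHull_min ?_ (convex_hyperplane (isLinearMap_sum_indicator Y) _) hη
  rintro _ ⟨C, hC, rfl⟩
  have hCY : M.IsBasis C Y := (isBase_restrict_iff hY).1 hC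
  rw [mem_ofPred_eq, indicator_indicator, inter_eq_right.2 hCY.subset, sum_indicator_one,
    hCY.rk'_eq_ncard]

def IsMinBase (M : Matroid α) (η : α → ℝ) (B : Set α) : Prop :=
  M.IsBase B ∧ ∀ B', M.IsBase B' → ∑ e, B.indicator η e ≤ ∑ e, B'.indicator η e

lemma IsMinBase.exists_le_of_indep (hB : M.IsMinBase η B) (hη : ∀ e, 0 ≤ η e) (hJ : M.Indep J)
    (heJ : e ∈ J) (heB : e ∉ B) (hJB : J ⊆ insert e B) : ∃ f ∈ B, f ∉ J ∧ η f ≤ η e := by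
  classical
  obtain ⟨B', hB', hJB', hB'JB⟩ := hJ.exists_isBase_subset_union_isBase hB.1
  obtain ⟨f, hfB, hfB'⟩ : (B \ B').Nonempty :=
    sdiff_nonempty.2 fun hBB' ↦ heB ((hB.1.eq_of_subset_isBase hB' hBB') ▸ hJB' heJ)
  refine ⟨f, hfB, fun hfJ ↦ hfB' (hJB' hfJ), ?_⟩
  have hsub : B'.toFinset ⊆ insert e (B.toFinset.erase f) := by
    intro x hx
    rw [mem_toFinset] at hx
    have hxf : x ≠ f := fun hxf ↦ hfB' (hxf ▸ hx)
    rcases hB'JB hx with hxJ | hxB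
    · rcases hJB hxJ with rfl | hxB
      · exact Finset.mem_insert_self _ _
      · exact Finset.mem_insert_of_mem (Finset.mem_erase.2 ⟨hxf, mem_toFinset.2 hxB⟩)
    · exact Finset.mem_insert_of_mem (Finset.mem_erase.2 ⟨hxf, mem_toFinset.2 hxB⟩)
  have hle := Finset.sum_le_sum_of_subset_of_nonneg hsub fun x _ _ ↦ hη x
  rw [Finset.sum_insert (by simp [heB]), Finset.sum_erase_eq_sub (mem_toFinset.2 hfB)] at hle
  have hmin := hB.2 B' hB'
  rw [sum_indicator_eq_sum_toFinset, sum_indicator_eq_sum_toFinset] at hmin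
  linarith

lemma IsMinBase.isBasis_inter (hB : M.IsMinBase η B) (hη : ∀ e, 0 ≤ η e) (hY : Y ⊆ M.E)
    (hYη : ∀ e ∈ Y, ∀ f ∉ Y, η e < η f) : M.IsBasis (B ∩ Y) Y := by
  have hBY : M.Indep (B ∩ Y) := hB.1.indep.subset inter_subset_left
  refine hBY.isBasis_of_subset_of_subset_closure inter_subset_right fun e heY ↦ ?_
  by_contra hecl
  have hins : M.Indep (insert e (B ∩ Y)) := hBY.insert_indep_iff.2 (Or.inl ⟨hY heY, hecl⟩)
  have heB : e ∉ B := fun heB ↦ hecl (M.subset_closure _ hBY.subset_ground ⟨heB, heY⟩)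
  obtain ⟨f, hfB, hfJ, hfe⟩ := hB.exists_le_of_indep hη hins (mem_insert e _) heB
    (insert_subset_insert inter_subset_left)
  exact (hYη e heY f fun hfY ↦ hfJ (mem_insert_of_mem e ⟨hfB, hfY⟩)).not_ge hfe

namespace IsBaseCombination

variable {ι : Type*} {t : Finset ι} {w : ι → ℝ} {B : ι → Set α} {i : ι}

lemma isMinBase (h : M.IsBaseCombination η t w B)
    (hmin : ∀ η' ∈ convexHull ℝ M.baseVecs, ∑ e, η e ^ 2 ≤ ∑ e, η' e ^ 2) (hi : i ∈ t) :
    M.IsMinBase η (B i) := by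
  classical
  refine ⟨h.isBase i hi, fun B' hB' ↦ ?_⟩
  have h0 := sum_mul_sub_nonneg_of_isMinNorm (convex_convexHull ℝ _) h.mem_convexHull hmin
    (h.update hi hB').mem_convexHull
  have hexp : ∑ e, η e * ((η + w i • (B'.indicator 1 - (B i).indicator 1) : α → ℝ) e - η e)
      = w i * (∑ e, B'.indicator η e - ∑ e, (B i).indicator η e) := by
    simp only [Pi.add_apply, Pi.smul_apply, Pi.sub_apply, smul_eq_mul, add_sub_cancel_left,
      Finset.mul_sum, ← Finset.sum_sub_distrib]
    refine Finset.sum_congr rfl fun e _ ↦ ?_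
    simp only [indicator_apply, Pi.one_apply]
    split_ifs <;> ring
  rw [hexp] at h0
  linarith [nonneg_of_mul_nonneg_right h0 (h.pos i hi)]

lemma pos_of_loopless (h : M.IsBaseCombination η t w B)
    (hmin : ∀ η' ∈ convexHull ℝ M.baseVecs, ∑ e, η e ^ 2 ≤ ∑ e, η' e ^ 2)
    (hloop : M.Loopless') (he : e ∈ M.E) : 0 < η e := by
  obtain ⟨i, hi⟩ : t.Nonempty := Finset.nonempty_of_sum_ne_zero (h.sum_eq_one ▸ one_ne_zero)
  by_cases heB : e ∈ B i
  · exact (h.pos i hi).trans_le (h.le_apply hi heB)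
  obtain ⟨f, hfB, -, hfe⟩ := (h.isMinBase hmin hi).exists_le_of_indep h.nonneg (hloop e he)
    rfl heB (singleton_subset_iff.2 (mem_insert e _))
  exact ((h.pos i hi).trans_le (h.le_apply hi hfB)).trans_le hfe

end IsBaseCombination

end Matroid

end

theorem etaStar_min_level_set_general {α : Type*} [Fintype α]
    (M : Matroid α) (hE : M.E = Set.univ)
    (hloop : M.Loopless')
    (ηs : α → ℝ) (hmem : ηs ∈ convexHull ℝ M.baseVecs)
    (hmin : ∀ η ∈ convexHull ℝ M.baseVecs, ∑ e, ηs e ^ 2 ≤ ∑ e, η e ^ 2)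
    (ηmin : ℝ) (hηmin : IsLeast (Set.range ηs) ηmin)
    (Y : Set α) (hYdef : Y = {e : α | ηs e = ηmin}) :
    (∑ e, Y.indicator ηs e = (M.rk' Y : ℝ)) ∧
    (M.closure Y = Y) ∧
    (ηmin = (M.rk' Y : ℝ) / (Nat.card Y : ℝ) ∧ 0 < ηmin) ∧
    (ηmin = 1 / M.arboricity) ∧
    ((Y.indicator (fun _ ↦ ηmin) ∈ convexHull ℝ (M ↾ Y).baseVecs) ∧
      ∀ η ∈ convexHull ℝ (M ↾ Y).baseVecs,
        ∑ e, (Y.indicator (fun _ ↦ ηmin)) e ^ 2 ≤ ∑ e, η e ^ 2) := by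
  obtain ⟨ι, t, w, B, hc⟩ := exists_isBaseCombination_of_mem_convexHull hmem
  have hpos (e : α) : 0 < ηs e := hc.pos_of_loopless hmin hloop (hE ▸ mem_univ e)
  have hYE : Y ⊆ M.E := hE ▸ subset_univ Y
  obtain ⟨e₀, he₀⟩ := hηmin.1
  have hmemY (e : α) : e ∈ Y ↔ ηs e = ηmin := hYdef ▸ Iff.rfl
  have hYη : ∀ e ∈ Y, ∀ f ∉ Y, ηs e < ηs f := fun e he f hf ↦
    (hmemY e).1 he ▸ (hηmin.2 ⟨f, rfl⟩).lt_of_ne' (mt (hmemY f).2 hf)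
  have hbasis (i) (hi : i ∈ t) : M.IsBasis (B i ∩ Y) Y :=
    (hc.isMinBase hmin hi).isBasis_inter hc.nonneg hYE hYη
  have hconst : Y.indicator (fun _ ↦ ηmin) = Y.indicator ηs :=
    indicator_congr fun e he ↦ ((hmemY e).1 he).symm
  have hhull : Y.indicator (fun _ ↦ ηmin) ∈ convexHull ℝ (M ↾ Y).baseVecs :=
    hconst ▸ (hc.restrict hbasis).mem_convexHull
  have hYsum : ηmin * Y.ncard = M.rk' Y := by
    rw [← sum_indicator_const, ← sum_indicator_eq_rk'_of_mem_convexHull_restrict hhull hYE,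
      indicator_indicator, inter_self]
  have hYcard : (0 : ℝ) < Y.ncard := by exact_mod_cast (ncard_pos).2 ⟨e₀, (hmemY e₀).2 he₀⟩
  have hYr : 0 < M.rk' Y := by exact_mod_cast hYsum ▸ mul_pos (he₀ ▸ hpos e₀) hYcard
  refine ⟨?_, ?_, ⟨?_, he₀ ▸ hpos e₀⟩, ?_, hhull, fun η hη ↦ sum_sq_indicator_const_le ?_⟩
  · rw [← hconst, sum_indicator_const, hYsum]
  · refine (M.subset_closure Y hYE).antisymm' fun e he ↦ ?_
    obtain ⟨i, hi, heB⟩ := hc.exists_mem_of_pos (hpos e)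
    exact (hc.isBase i hi).indep.inter_closure_subset (hbasis i hi) ⟨heB, he⟩
  · rw [Nat.card_coe_set_eq, ← hYsum, mul_div_cancel_right₀ _ hYcard.ne']
  · have hle (X) (hX : X ⊆ M.E) : ηmin * X.ncard ≤ M.rk' X :=
      (mul_ncard_le_sum_indicator (fun e ↦ hηmin.2 ⟨e, rfl⟩) X).trans
        (sum_indicator_le_rk'_of_mem_convexHull hmem hX)
    rw [arboricity_eq_one_div hYE hYr hYsum hle, one_div_one_div]
  · rw [hYsum, sum_indicator_eq_rk'_of_mem_convexHull_restrict hη hYE]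

/-- Properties of the set `E_min` where `η*` attains its minimum: `η*(Y) = r(Y)`, `Y` is
closed, the minimum value is `r(Y)/|Y| > 0`, it equals `1/D(M)`, and the minimum-norm
point of the convex hull of base indicator vectors of the restriction `M|Y` is the
constant vector `η*_min` on `Y`. -/
theorem etaStar_min_level_set {α : Type*} [Fintype α] [Nonempty α]
    (M : Matroid α) (hE : M.E = Set.univ)
    (hloop : M.Loopless') (hrk : 0 < M.rk' M.E)
    (ηs : α → ℝ) (hmem : ηs ∈ convexHull ℝ M.baseVecs)
    (hmin : ∀ η ∈ convexHull ℝ M.baseVecs, ∑ e, ηs e ^ 2 ≤ ∑ e, η e ^ 2)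
    (ηmin : ℝ) (hηmin : IsLeast (Set.range ηs) ηmin)
    (Y : Set α) (hYdef : Y = {e : α | ηs e = ηmin}) :
    (∑ e, Y.indicator ηs e = (M.rk' Y : ℝ)) ∧
    (M.closure Y = Y) ∧
    (ηmin = (M.rk' Y : ℝ) / (Nat.card Y : ℝ) ∧ 0 < ηmin) ∧
    (ηmin = 1 / M.arboricity) ∧
    ((Y.indicator (fun _ ↦ ηmin) ∈ convexHull ℝ (M ↾ Y).baseVecs) ∧
      ∀ η ∈ convexHull ℝ (M ↾ Y).baseVecs,
        ∑ e, (Y.indicator (fun _ ↦ ηmin)) e ^ 2 ≤ ∑ e, η e ^ 2) :=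
  etaStar_min_level_set_general M hE hloop ηs hmem hmin ηmin hηmin Y hYdef
end

section
/- If τ(M) = |E|/r(E), then η* is a constant vector; likewise, if υ(M) = |E|/r(E), then η* is a constant vector. -/
open Set Matroid

/-- The base packing value `τ(M)`. -/
noncomputable def Matroid.packingValue {α : Type*} [Fintype α] (M : Matroid α) : ℝ :=
  sSup {t : ℝ | ∃ lam : Set α → ℝ, (∀ B, 0 ≤ lam B) ∧ (∀ B, ¬ M.IsBase B → lam B = 0) ∧
    (∀ e ∈ M.E, (∑ B : Set α, B.indicator (fun _ ↦ lam B) e) ≤ 1) ∧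
    t = ∑ B : Set α, lam B}

/-- The base covering value `υ(M)`. -/
noncomputable def Matroid.coveringValue {α : Type*} [Fintype α] (M : Matroid α) : ℝ :=
  sInf {t : ℝ | ∃ kap : Set α → ℝ, (∀ B, 0 ≤ kap B) ∧ (∀ B, ¬ M.IsBase B → kap B = 0) ∧
    (∀ e ∈ M.E, 1 ≤ (∑ B : Set α, B.indicator (fun _ ↦ kap B) e)) ∧
    t = ∑ B : Set α, kap B}


/-!
Every point of the base polytope has coordinate sum `r`, so with `c = r / n` its squared
distance to the constant vector `c` equals its squared norm minus `n c²`. Hence the minimum-norm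
point `η*` is that constant vector as soon as the constant vector lies in the closure of the
polytope. A packing (covering) of total weight `s` close to `n / r`, rescaled by `1 / s`, is a
point of the polytope with all coordinates at most (at least) `1 / s ≈ c`; a one-sided bound and
the fixed coordinate sum together force every coordinate close to `c`.
-/

open Finset in
lemma sum_sq_sub_const_eq {α : Type*} [Fintype α] {x : α → ℝ} {c : ℝ}
    (hx : ∑ e, x e = Fintype.card α * c) :
    ∑ e, (x e - c) ^ 2 = ∑ e, x e ^ 2 - Fintype.card α * c ^ 2 := by
  simp only [sub_sq, sum_add_distrib, sum_sub_distrib, ← sum_mul, ← mul_sum, hx, sum_const,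
    card_univ, nsmul_eq_mul]
  ring

lemma eq_const_of_mem_closure_of_sum_sq_le {α : Type*} [Fintype α] {C : Set (α → ℝ)} {c : ℝ}
    {η : α → ℝ} (hsum : ∀ x ∈ C, ∑ e, x e = Fintype.card α * c) (hη : η ∈ C)
    (hmin : ∀ x ∈ C, ∑ e, η e ^ 2 ≤ ∑ e, x e ^ 2) (hc : (fun _ ↦ c) ∈ closure C) (e : α) :
    η e = c := by
  have hle : ∑ e, η e ^ 2 ≤ ∑ _e : α, c ^ 2 :=
    closure_minimal hmin (isClosed_le continuous_const <|
      continuous_finsetSum _ fun e _ ↦ (continuous_apply e).pow 2) hc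
  have hzero : ∑ e, (η e - c) ^ 2 ≤ 0 := by
    rw [sum_sq_sub_const_eq (hsum η hη)]
    simpa [Finset.sum_const, nsmul_eq_mul] using hle
  have hsq := (Finset.sum_eq_zero_iff_of_nonneg fun e _ ↦ sq_nonneg (η e - c)).1
    (hzero.antisymm (Finset.sum_nonneg fun e _ ↦ sq_nonneg _)) e (Finset.mem_univ e)
  simpa [sub_eq_zero] using hsq

lemma abs_sub_le_of_forall_le_of_sum_eq {α : Type*} [Fintype α] {x : α → ℝ} {c t : ℝ}
    (hx : ∀ e, x e ≤ t) (hsum : ∑ e, x e = Fintype.card α * c) (e : α) :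
    |x e - c| ≤ Fintype.card α * (t - c) := by
  have hgap : t - x e ≤ ∑ f, (t - x f) :=
    Finset.single_le_sum (fun f _ ↦ sub_nonneg.2 (hx f)) (Finset.mem_univ e)
  rw [Finset.sum_sub_distrib, hsum, Finset.sum_const, Finset.card_univ, nsmul_eq_mul] at hgap
  have hn : (1 : ℝ) ≤ Fintype.card α := by exact_mod_cast Fintype.card_pos_iff.2 ⟨e⟩
  rw [abs_le]
  constructor <;> nlinarith [hx e]

lemma const_mem_closure_of_forall_le {α : Type*} [Fintype α] {C : Set (α → ℝ)} {c : ℝ}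
    (hsum : ∀ x ∈ C, ∑ e, x e = Fintype.card α * c) (h : ∀ t > c, ∃ x ∈ C, ∀ e, x e ≤ t) :
    (fun _ ↦ c) ∈ closure C := by
  refine Metric.mem_closure_iff.2 fun ε hε ↦ ?_
  set n : ℝ := (Fintype.card α : ℝ)
  obtain ⟨x, hxC, hx⟩ := h (c + ε / (n + 1)) (lt_add_of_pos_right c (by positivity))
  refine ⟨x, hxC, (dist_pi_lt_iff hε).2 fun e ↦ ?_⟩
  calc dist c (x e) = |x e - c| := by rw [Real.dist_eq, abs_sub_comm]
    _ ≤ n * (c + ε / (n + 1) - c) := abs_sub_le_of_forall_le_of_sum_eq hx (hsum x hxC) e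
    _ < ε := by
      rw [add_sub_cancel_left, mul_div_assoc', div_lt_iff₀ (by positivity)]
      linarith

lemma const_mem_closure_of_forall_ge {α : Type*} [Fintype α] {C : Set (α → ℝ)} {c : ℝ}
    (hsum : ∀ x ∈ C, ∑ e, x e = Fintype.card α * c) (h : ∀ t < c, ∃ x ∈ C, ∀ e, t ≤ x e) :
    (fun _ ↦ c) ∈ closure C := by
  have hneg : (fun _ ↦ -c) ∈ closure (-C) := by
    refine const_mem_closure_of_forall_le (fun x hx ↦ ?_) fun t ht ↦ ?_
    · simpa [Finset.sum_neg_distrib] using congrArg Neg.neg (hsum _ (Set.mem_neg.1 hx))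
    · obtain ⟨x, hxC, hx⟩ := h (-t) (by linarith)
      exact ⟨-x, by simpa using hxC, fun e ↦ by simpa [neg_le] using hx e⟩
  rw [← neg_closure, Set.mem_neg] at hneg
  simpa [Pi.neg_def] using hneg

namespace Matroid

variable {α : Type*} {M : Matroid α}

lemma IsBase.ncard_eq_rk' [M.RankFinite] {B : Set α} (hB : M.IsBase B) :
    B.ncard = M.rk' M.E := by
  have hle : ∀ n ∈ {n : ℕ | ∃ I, I ⊆ M.E ∧ M.Indep I ∧ n = Nat.card I}, n ≤ B.ncard := by
    rintro n ⟨I, -, hI, rfl⟩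
    obtain ⟨B', hB', hIB'⟩ := hI.exists_isBase_superset
    rw [Nat.card_coe_set_eq, ← hB'.ncard_eq_ncard_of_isBase hB]
    exact ncard_le_ncard hIB' hB'.finite
  rw [← Nat.card_coe_set_eq] at hle ⊢
  exact le_antisymm (le_csSup ⟨_, hle⟩ ⟨B, hB.subset_ground, hB.indep, rfl⟩)
    (csSup_le ⟨_, B, hB.subset_ground, hB.indep, rfl⟩ hle)

variable [Fintype α]

lemma sum_eq_rk'_of_mem_convexHull_baseVecs {x : α → ℝ} (hx : x ∈ convexHull ℝ M.baseVecs) :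
    ∑ e, x e = M.rk' M.E := by
  refine convexHull_min ?_ (convex_hyperplane ⟨fun f g ↦ Finset.sum_add_distrib,
    fun a f ↦ (Finset.mul_sum _ _ _).symm⟩ _) hx
  rintro _ ⟨B, hB, rfl⟩
  classical
  simp [Set.indicator_apply, ← hB.ncard_eq_rk', Set.ncard_eq_toFinset_card']

lemma div_sum_mem_convexHull_baseVecs {w : Set α → ℝ} (hw₀ : ∀ B, 0 ≤ w B)
    (hw : ∀ B, ¬ M.IsBase B → w B = 0) (hpos : 0 < ∑ B : Set α, w B) :
    (fun e ↦ (∑ B : Set α, B.indicator (fun _ ↦ w B) e) / ∑ B : Set α, w B) ∈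
      convexHull ℝ M.baseVecs := by
  classical
  have h := Finset.centerMass_mem_convexHull (s := M.baseVecs)
    ({B | w B ≠ 0} : Finset (Set α)) (fun B _ ↦ hw₀ B) (by rwa [Finset.sum_filter_ne_zero])
    (z := fun B ↦ B.indicator 1)
    fun B hB ↦ ⟨B, not_not.1 (mt (hw B) (Finset.mem_filter.1 hB).2), rfl⟩
  rw [Finset.centerMass_filter_ne_zero, Finset.centerMass] at h
  convert h using 1
  ext e
  simp [Set.indicator_apply, div_eq_inv_mul, Finset.mul_sum]

lemma exists_mem_convexHull_baseVecs_le_of_packingValue_eq {c t : ℝ} (hc : 0 < c)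
    (hτ : M.packingValue = c⁻¹) (ht : c < t) :
    ∃ x ∈ convexHull ℝ M.baseVecs, ∀ e ∈ M.E, x e ≤ t := by
  set S := {s : ℝ | ∃ lam : Set α → ℝ, (∀ B, 0 ≤ lam B) ∧ (∀ B, ¬ M.IsBase B → lam B = 0) ∧
    (∀ e ∈ M.E, (∑ B : Set α, B.indicator (fun _ ↦ lam B) e) ≤ 1) ∧ s = ∑ B : Set α, lam B}
  have hS : sSup S = c⁻¹ := hτ
  have hzero : (0 : ℝ) ∈ S := ⟨fun _ ↦ 0, fun _ ↦ le_rfl, fun _ _ ↦ rfl, by simp, by simp⟩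
  obtain ⟨_, ⟨lam, hlam₀, hlam, hload, rfl⟩, hs⟩ :=
    exists_lt_of_lt_csSup ⟨0, hzero⟩ (hS ▸ inv_strictAnti₀ hc ht)
  have hpos : 0 < ∑ B : Set α, lam B := (inv_pos.2 (hc.trans ht)).trans hs
  refine ⟨_, div_sum_mem_convexHull_baseVecs hlam₀ hlam hpos, fun e he ↦ ?_⟩
  calc (∑ B : Set α, B.indicator (fun _ ↦ lam B) e) / ∑ B : Set α, lam B
      ≤ 1 / ∑ B : Set α, lam B := div_le_div_of_nonneg_right (hload e he) hpos.le
    _ ≤ t := by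
      rw [one_div]
      exact (inv_lt_of_inv_lt₀ (hc.trans ht) hs).le

lemma exists_mem_convexHull_baseVecs_ge_of_coveringValue_eq {c t : ℝ} (hc : 0 < c)
    (hυ : M.coveringValue = c⁻¹) (ht : t < c) :
    ∃ x ∈ convexHull ℝ M.baseVecs, ∀ e ∈ M.E, t ≤ x e := by
  set K := {s : ℝ | ∃ kap : Set α → ℝ, (∀ B, 0 ≤ kap B) ∧ (∀ B, ¬ M.IsBase B → kap B = 0) ∧
    (∀ e ∈ M.E, 1 ≤ (∑ B : Set α, B.indicator (fun _ ↦ kap B) e)) ∧ s = ∑ B : Set α, kap B}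
  have hK : sInf K = c⁻¹ := hυ
  have hne : K.Nonempty := by
    by_contra h
    rw [Set.not_nonempty_iff_eq_empty.1 h, Real.sInf_empty] at hK
    exact (inv_pos.2 hc).ne hK
  have hbdd : BddBelow K := ⟨0, by
    rintro _ ⟨kap, hkap₀, -, -, rfl⟩
    exact Finset.sum_nonneg fun B _ ↦ hkap₀ B⟩
  -- `t` may be nonpositive, so bound the covering weight by `t'⁻¹` for a positive `t' ≥ t`
  set t' := max t (c / 2)
  have ht' : 0 < t' := lt_max_of_lt_right (half_pos hc)
  obtain ⟨s, hsK, hs⟩ := exists_lt_of_csInf_lt hne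
    (hK ▸ inv_strictAnti₀ ht' (max_lt ht (half_lt_self hc)))
  have hpos : 0 < s := (inv_pos.2 hc).trans_le (hK ▸ csInf_le hbdd hsK)
  obtain ⟨kap, hkap₀, hkap, hload, rfl⟩ := hsK
  refine ⟨_, div_sum_mem_convexHull_baseVecs hkap₀ hkap hpos, fun e he ↦ ?_⟩
  calc t ≤ t' := le_max_left _ _
    _ ≤ 1 / ∑ B : Set α, kap B := by
      rw [one_div]
      exact (lt_inv_of_lt_inv₀ hpos hs).le
    _ ≤ (∑ B : Set α, B.indicator (fun _ ↦ kap B) e) / ∑ B : Set α, kap B :=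
      div_le_div_of_nonneg_right (hload e he) hpos.le

end Matroid

theorem etaStar_const_of_packing_or_covering_eq_density_general {α : Type*} [Fintype α]
    (M : Matroid α) (hE : M.E = Set.univ)
    (hrk : 0 < M.rk' M.E)
    (ηs : α → ℝ) (hmem : ηs ∈ convexHull ℝ M.baseVecs)
    (hmin : ∀ η ∈ convexHull ℝ M.baseVecs, ∑ e, ηs e ^ 2 ≤ ∑ e, η e ^ 2) :
    (M.packingValue = (Fintype.card α : ℝ) / (M.rk' M.E : ℝ) → ∃ c : ℝ, ∀ e, ηs e = c) ∧
    (M.coveringValue = (Fintype.card α : ℝ) / (M.rk' M.E : ℝ) → ∃ c : ℝ, ∀ e, ηs e = c) := by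
  set n : ℝ := (Fintype.card α : ℝ)
  set r : ℝ := (M.rk' M.E : ℝ)
  have hr : 0 < r := Nat.cast_pos.2 hrk
  have hn : 0 < n := by
    obtain ⟨e, -, -⟩ := Finset.exists_ne_zero_of_sum_ne_zero
      ((M.sum_eq_rk'_of_mem_convexHull_baseVecs hmem).trans_ne hr.ne')
    exact Nat.cast_pos.2 (Fintype.card_pos_iff.2 ⟨e⟩)
  have hsum : ∀ x ∈ convexHull ℝ M.baseVecs, ∑ e, x e = n * (r / n) := fun x hx ↦ by
    rw [mul_div_cancel₀ _ hn.ne']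
    exact M.sum_eq_rk'_of_mem_convexHull_baseVecs hx
  have hc : 0 < r / n := div_pos hr hn
  have hdensity : n / r = (r / n)⁻¹ := (inv_div r n).symm
  refine ⟨fun hτ ↦ ⟨r / n, eq_const_of_mem_closure_of_sum_sq_le hsum hmem hmin ?_⟩,
    fun hυ ↦ ⟨r / n, eq_const_of_mem_closure_of_sum_sq_le hsum hmem hmin ?_⟩⟩
  · refine const_mem_closure_of_forall_le hsum fun t ht ↦ ?_
    obtain ⟨x, hx, hxt⟩ :=
      M.exists_mem_convexHull_baseVecs_le_of_packingValue_eq hc (hτ.trans hdensity) ht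
    exact ⟨x, hx, fun e ↦ hxt e (hE ▸ Set.mem_univ e)⟩
  · refine const_mem_closure_of_forall_ge hsum fun t ht ↦ ?_
    obtain ⟨x, hx, hxt⟩ :=
      M.exists_mem_convexHull_baseVecs_ge_of_coveringValue_eq hc (hυ.trans hdensity) ht
    exact ⟨x, hx, fun e ↦ hxt e (hE ▸ Set.mem_univ e)⟩

/-- If `τ(M) = |E|/r(E)` then `η*` is constant; likewise if `υ(M) = |E|/r(E)` then `η*`
is constant. -/
theorem etaStar_const_of_packing_or_covering_eq_density {α : Type*} [Fintype α] [Nonempty α]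
    (M : Matroid α) (hE : M.E = Set.univ)
    (hloop : M.Loopless') (hrk : 0 < M.rk' M.E)
    (ηs : α → ℝ) (hmem : ηs ∈ convexHull ℝ M.baseVecs)
    (hmin : ∀ η ∈ convexHull ℝ M.baseVecs, ∑ e, ηs e ^ 2 ≤ ∑ e, η e ^ 2) :
    (M.packingValue = (Fintype.card α : ℝ) / (M.rk' M.E : ℝ) → ∃ c : ℝ, ∀ e, ηs e = c) ∧
    (M.coveringValue = (Fintype.card α : ℝ) / (M.rk' M.E : ℝ) → ∃ c : ℝ, ∀ e, ηs e = c) :=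
  etaStar_const_of_packing_or_covering_eq_density_general M hE hrk ηs hmem hmin
end

section
/- Let M be a connected matroid on a finite ground set E and let e₁, e₂ ∈ E be two distinct elements. Then there exist bases B₁ and B₂ of M such that B₁ − B₂ = {e₁} and B₂ − B₁ = {e₂}. -/
/-!
Two distinct elements of a connected matroid lie on a common circuit `C`: the elements sharing a
circuit with `e₁` form a separator, because sharing a circuit propagates across any circuit
meeting that set (strong circuit elimination). Extend `C - e₂` to a base `B₁`; then `C` is the
fundamental circuit of `e₂` in `B₁`, so `B₁ - e₁ + e₂` is again a base.
-/

open Set Matroid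

/-- A separator of `M`: a subset of the ground set such that every circuit lies inside it
or inside its complement. -/
def Matroid.Separator' {α : Type*} (M : Matroid α) (X : Set α) : Prop :=
  X ⊆ M.E ∧ ∀ C, M.Circuit' C → C ⊆ X ∨ C ⊆ M.E \ X

/-- A matroid is connected if its only separators are `∅` and the ground set. -/
def Matroid.Connected' {α : Type*} (M : Matroid α) : Prop :=
  ∀ X, M.Separator' X → X = ∅ ∨ X = M.E

namespace Matroid

variable {α : Type*} {M : Matroid α} {C C₁ C₂ : Set α} {e f : α}

lemma circuit'_iff_isCircuit : M.Circuit' C ↔ M.IsCircuit C := by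
  rw [isCircuit_iff_forall_ssubset, Dep, Circuit']
  tauto

lemma IsCircuit.exists_mem_sdiff_of_mem_sdiff (hC : M.IsCircuit C) (hC₁ : M.IsCircuit C₁)
    (he : e ∈ C₁) (heC : e ∉ C) : ∃ f ∈ C, f ∉ C₁ := by
  by_contra! h
  exact heC (hC.eq_of_subset_isCircuit hC₁ h ▸ he)

/-- Oxley, Proposition 4.1.2. By induction on `|C₂ \ C₁|`: two strong eliminations replace `C₂`
by a circuit `C₄ ∋ f` that still meets `C₁` and has `C₄ \ C₁ ⊂ C₂ \ C₁`. -/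
lemma IsCircuit.exists_isCircuit_mem_mem_of_inter_nonempty [M.Finitary]
    (hC₁ : M.IsCircuit C₁) (hC₂ : M.IsCircuit C₂) (hC₁₂ : (C₁ ∩ C₂).Nonempty)
    (he : e ∈ C₁) (hf : f ∈ C₂) : ∃ C, M.IsCircuit C ∧ e ∈ C ∧ f ∈ C := by
  induction hn : (C₂ \ C₁).ncard using Nat.strong_induction_on generalizing C₂ with
  | _ n IH =>
  subst hn
  by_cases hfC₁ : f ∈ C₁
  · exact ⟨C₁, hC₁, he, hfC₁⟩
  by_cases heC₂ : e ∈ C₂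
  · exact ⟨C₂, hC₂, heC₂, hf⟩
  obtain ⟨x, hxC₁, hxC₂⟩ := hC₁₂
  obtain ⟨C₃, hC₃sub, hC₃, heC₃⟩ := hC₁.strong_elimination hC₂ hxC₁ hxC₂ he heC₂
  by_cases hfC₃ : f ∈ C₃
  · exact ⟨C₃, hC₃, heC₃, hfC₃⟩
  obtain ⟨y, hyC₃, hyC₁⟩ := hC₃.exists_mem_sdiff_of_mem_sdiff hC₁ hxC₁ fun h ↦ (hC₃sub h).2 rfl
  have hyC₂ : y ∈ C₂ := (hC₃sub hyC₃).1.resolve_left hyC₁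
  obtain ⟨C₄, hC₄sub, hC₄, hfC₄⟩ := hC₂.strong_elimination hC₃ hyC₂ hyC₃ hf hfC₃
  have hC₄C₁₂ : C₄ ⊆ C₁ ∪ C₂ := hC₄sub.trans <| sdiff_subset.trans <|
    union_subset subset_union_right (hC₃sub.trans sdiff_subset)
  have hyC₄ : y ∉ C₄ := fun h ↦ (hC₄sub h).2 rfl
  have hC₁₄ : (C₁ ∩ C₄).Nonempty := by
    by_contra! h
    obtain ⟨z, hzC₄, hzC₂⟩ := hC₄.exists_mem_sdiff_of_mem_sdiff hC₂ hyC₂ hyC₄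
    exact h.subset ⟨(hC₄C₁₂ hzC₄).resolve_right hzC₂, hzC₄⟩
  have hlt : (C₄ \ C₁).ncard < (C₂ \ C₁).ncard := by
    refine ncard_lt_ncard ⟨fun z hz ↦ ⟨(hC₄C₁₂ hz.1).resolve_left hz.2, hz.2⟩, fun h ↦ ?_⟩
      hC₂.finite.sdiff
    exact hyC₄ (h ⟨hyC₂, hyC₁⟩).1
  exact IH _ hlt hC₄ hC₁₄ hfC₄ rfl

def circuitComponent (M : Matroid α) (e : α) : Set α :=
  insert e {x | ∃ C, M.IsCircuit C ∧ e ∈ C ∧ x ∈ C}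

lemma separator'_circuitComponent [M.Finitary] (he : e ∈ M.E) :
    M.Separator' (M.circuitComponent e) := by
  refine ⟨insert_subset he fun x ⟨C, hC, _, hxC⟩ ↦ hC.subset_ground hxC, fun C hC ↦ ?_⟩
  rw [circuit'_iff_isCircuit] at hC
  by_cases hdisj : Disjoint C (M.circuitComponent e)
  · exact Or.inr (subset_sdiff.2 ⟨hC.subset_ground, hdisj⟩)
  obtain ⟨x, hxC, hx⟩ := not_disjoint_iff.1 hdisj
  refine Or.inl fun y hyC ↦ Or.inr ?_
  obtain rfl | ⟨C', hC', heC', hxC'⟩ := hx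
  · exact ⟨C, hC, hxC, hyC⟩
  · exact hC'.exists_isCircuit_mem_mem_of_inter_nonempty hC ⟨x, hxC', hxC⟩ heC' hyC

lemma Connected'.exists_isCircuit_mem_mem [M.Finitary] (hM : M.Connected') (he : e ∈ M.E)
    (hf : f ∈ M.E) (hef : e ≠ f) : ∃ C, M.IsCircuit C ∧ e ∈ C ∧ f ∈ C := by
  obtain h | h := hM _ (separator'_circuitComponent he)
  · exact absurd h (insert_nonempty _ _).ne_empty
  · obtain rfl | hC := h.symm ▸ hf
    · exact absurd rfl hef
    · exact hC

lemma IsCircuit.exists_isBase_sdiff_eq (hC : M.IsCircuit C) (he : e ∈ C) (hf : f ∈ C)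
    (hef : e ≠ f) : ∃ B₁ B₂, M.IsBase B₁ ∧ M.IsBase B₂ ∧ B₁ \ B₂ = {e} ∧ B₂ \ B₁ = {f} := by
  obtain ⟨B, hB, hCB⟩ := (hC.sdiff_singleton_indep hf).exists_isBase_superset
  have hCfB : C ⊆ insert f B := sdiff_singleton_subset_iff.1 hCB
  have hfB : f ∉ B := fun h ↦ hC.not_indep (hB.indep.subset (hCfB.trans (insert_subset h le_rfl)))
  have heB : e ∈ B := hCB ⟨he, hef⟩
  have hindep : M.Indep (insert f B \ {e}) := by
    rw [← hB.indep.mem_fundCircuit_iff (by rw [hB.closure_eq]; exact hC.subset_ground hf) hfB,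
      ← hC.eq_fundCircuit_of_subset hB.indep hCfB]
    exact he
  refine ⟨B, _, hB, hB.exchange_isBase_of_indep' heB hfB hindep, ?_, ?_⟩
  · ext x; by_cases x = e <;> aesop
  · ext x; by_cases x = f <;> aesop

end Matroid

/-- In a connected matroid, for any two distinct elements `e₁, e₂` of the ground set there
are bases `B₁, B₂` with `B₁ − B₂ = {e₁}` and `B₂ − B₁ = {e₂}`. -/
theorem exists_bases_exchange_of_connected {α : Type*} [Fintype α]
    (M : Matroid α) (hconn : M.Connected')
    (e₁ e₂ : α) (h₁ : e₁ ∈ M.E) (h₂ : e₂ ∈ M.E) (hne : e₁ ≠ e₂) :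
    ∃ B₁ B₂ : Set α, M.IsBase B₁ ∧ M.IsBase B₂ ∧ B₁ \ B₂ = {e₁} ∧ B₂ \ B₁ = {e₂} := by
  obtain ⟨C, hC, he₁, he₂⟩ := hconn.exists_isCircuit_mem_mem h₁ h₂ hne
  exact hC.exists_isBase_sdiff_eq he₁ he₂ hne
end
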